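/- For N ≥ 2 and q = 2πm/N with m ∈ ℤ, define the twisted W state |W_q⟩ := (1/√N) Σ_{j=1}^N e^{-iqj} s_j†|0̄⟩. Then on the periodic N-qubit chain: (a) H_ImHop |W_q⟩ = sin(q) |W_q⟩ where H_ImHop = (i/2) Σ_j (s_j† s_{j+1} − s_{j+1}† s_j); and (b) H_ReHop |W_q⟩ = (1 − cos q) |W_q⟩ where H_ReHop = (1/2) Σ_j (s_j† s_j + s_{j+1}† s_{j+1} − s_j† s_{j+1} − s_{j+1}† s_j). Moreover |W_q⟩ is a unit vector. -/

import Mathlib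

open scoped BigOperators

noncomputable section

/-- Configurations of `N` qubits. -/
abbrev Cfg (N : ℕ) := Fin N → Fin 2

/-- The `N`-qubit Hilbert space `⊗_{j=1}^N ℂ²`, identified with `ℂ^(Fin N → Fin 2)`. -/
abbrev QS (N : ℕ) := EuclideanSpace ℂ (Cfg N)

/-- Computational basis state `|t⟩`. -/
def ket {N : ℕ} (t : Cfg N) : QS N := EuclideanSpace.single t 1

/-- Configuration with a single `1` at site `j`. -/
def eConf {N : ℕ} (j : Fin N) : Cfg N := fun k => if k = j then 1 else 0

/-- The all-zero product state `|0̄⟩`. -/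
def zeroKet (N : ℕ) : QS N := ket (fun _ => 0)

/-- The W state `|W⟩ = (1/√N) ∑_j |e_j⟩`. -/
def Wst (N : ℕ) : QS N := (Real.sqrt N : ℂ)⁻¹ • ∑ j : Fin N, ket (eConf j)

/-- Hard-core boson creation operator `s_j† = |1⟩⟨0|` acting at site `j`. -/
def aDag {N : ℕ} (j : Fin N) : QS N →ₗ[ℂ] QS N where
  toFun ψ := WithLp.toLp 2 (fun s => if s j = 1 then ψ (Function.update s j 0) else 0)
  map_add' ψ φ := by ext s; by_cases h : s j = 1 <;> simp [h]
  map_smul' c ψ := by ext s; by_cases h : s j = 1 <;> simp [h]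

/-- Hard-core boson annihilation operator `s_j = |0⟩⟨1|` acting at site `j`. -/
def aOp {N : ℕ} (j : Fin N) : QS N →ₗ[ℂ] QS N where
  toFun ψ := WithLp.toLp 2 (fun s => if s j = 0 then ψ (Function.update s j 1) else 0)
  map_add' ψ φ := by ext s; by_cases h : s j = 0 <;> simp [h]
  map_smul' c ψ := by ext s; by_cases h : s j = 0 <;> simp [h]

/-- Number operator `n_j = s_j† s_j = |1⟩⟨1|_j`. -/
def nOp {N : ℕ} (j : Fin N) : QS N →ₗ[ℂ] QS N := aDag j ∘ₗ aOp j

/-- The imaginary-hopping Hamiltonian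
`H_ImHop = (i/2) ∑_{j=1}^N (s_j† s_{j+1} − s_{j+1}† s_j)` on the periodic chain. -/
def HImHop (N : ℕ) [NeZero N] : QS N →ₗ[ℂ] QS N :=
  (Complex.I / 2) • ∑ j : Fin N, (aDag j ∘ₗ aOp (j + 1) - aDag (j + 1) ∘ₗ aOp j)

/-- The twisted W state `|W_q⟩ = (1/√N) ∑_{j=1}^N e^{-iqj} s_j†|0̄⟩`. -/
def Wq (N : ℕ) (q : ℝ) : QS N :=
  (Real.sqrt N : ℂ)⁻¹ •
    ∑ j : Fin N, Complex.exp (-Complex.I * q * ((j : ℕ) + 1)) • ket (eConf j)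

/-- The real-hopping Hamiltonian
`H_ReHop = (1/2) ∑_j (s_j† s_j + s_{j+1}† s_{j+1} − s_j† s_{j+1} − s_{j+1}† s_j)`. -/
def HReHop (N : ℕ) [NeZero N] : QS N →ₗ[ℂ] QS N :=
  (1 / 2 : ℂ) •
    ∑ j : Fin N, (nOp j + nOp (j + 1) - aDag j ∘ₗ aOp (j + 1) - aDag (j + 1) ∘ₗ aOp j)

/-! The state `|W_q⟩` lies in the one-particle sector, spanned by the orthonormal states
`s_j†|0̄⟩`. As `s_j† s_k` moves the amplitude at site `k` to site `j`, the two Hamiltonians act on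
amplitudes `c` as the discrete derivatives `(i/2)(c(j+1) - c(j-1))` and
`c j - (c(j+1) + c(j-1))/2`. Because `qN ∈ 2πℤ`, the plane wave `e^{-iqj}` is well defined on the
ring and a shift by `±1` multiplies it by `e^{∓iq}`, which yields the eigenvalues `sin q` and
`1 - cos q`. Its amplitudes have modulus one, so `‖W_q‖ = √N / √N = 1`. -/

namespace HardCoreChain

variable {N : ℕ}

open Complex

lemma ket_apply (t s : Cfg N) : ket t s = if s = t then 1 else 0 :=
  PiLp.single_apply 2 ℂ t 1 s

lemma eConf_injective : Function.Injective (eConf (N := N)) := by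
  intro j k h
  by_contra hne
  simpa [eConf, hne] using congrFun h j

lemma orthonormal_ket_eConf : Orthonormal ℂ (fun j : Fin N => ket (eConf j)) := by
  have h : Orthonormal ℂ (ket (N := N)) := by
    rw [orthonormal_iff_ite]
    intro s t
    simp [ket, EuclideanSpace.inner_single_left]
  exact h.comp eConf eConf_injective

lemma update_zero_eq_zero_iff (s : Cfg N) (j : Fin N) (hj : s j = 1) :
    Function.update s j 0 = (fun _ => 0) ↔ s = eConf j := by
  constructor
  · intro h
    funext i
    by_cases hi : i = j
    · simp [hi, hj, eConf]
    · simpa [hi, eConf] using congrFun h i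
  · rintro rfl
    funext i
    by_cases hi : i = j <;> simp [hi, eConf]

lemma update_one_eq_eConf_iff (s : Cfg N) (j : Fin N) (hj : s j = 0) :
    Function.update s j 1 = eConf j ↔ s = fun _ => 0 := by
  constructor
  · intro h
    funext i
    by_cases hi : i = j
    · simp [hi, hj]
    · simpa [hi, eConf] using congrFun h i
  · rintro rfl
    funext i
    by_cases hi : i = j <;> simp [hi, eConf]

lemma aDag_zeroKet (j : Fin N) : aDag j (zeroKet N) = ket (eConf j) := by
  ext s
  change (if s j = 1 then ket _ (Function.update s j 0) else 0) = ket (eConf j) s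
  by_cases hj : s j = 1
  · simp only [hj, if_true, ket_apply, update_zero_eq_zero_iff s j hj]
  · have hs : s ≠ eConf j := by rintro rfl; simp [eConf] at hj
    simp [hj, hs, ket_apply]

lemma aOp_ket_eConf (k l : Fin N) :
    aOp k (ket (eConf l)) = if k = l then zeroKet N else 0 := by
  ext s
  change (if s k = 0 then ket (eConf l) (Function.update s k 1) else 0) = _
  by_cases hkl : k = l
  · subst hkl
    by_cases hk : s k = 0
    · simp [hk, ket_apply, zeroKet, update_one_eq_eConf_iff s k hk]
    · have hs : s ≠ fun _ => 0 := by rintro rfl; simp at hk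
      simp [hk, hs, zeroKet, ket_apply]
  · have hne : ∀ s : Cfg N, Function.update s k 1 ≠ eConf l := fun s h => by
      simpa [eConf, hkl] using congrFun h k
    simp [hkl, hne, ket_apply]

lemma hop_ket_eConf (j k l : Fin N) :
    (aDag j ∘ₗ aOp k) (ket (eConf l)) = if k = l then ket (eConf j) else 0 := by
  rw [LinearMap.comp_apply, aOp_ket_eConf]
  split_ifs <;> simp [aDag_zeroKet]

/-- The one-particle state `∑ⱼ c j s_j†|0̄⟩` with amplitudes `c`. -/
def singleExcitation : (Fin N → ℂ) →ₗ[ℂ] QS N :=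
  Fintype.linearCombination ℂ fun j => ket (eConf j)

lemma singleExcitation_apply (c : Fin N → ℂ) :
    singleExcitation c = ∑ j, c j • ket (eConf j) :=
  Fintype.linearCombination_apply ℂ _ c

lemma hop_singleExcitation (c : Fin N → ℂ) (j k : Fin N) :
    (aDag j ∘ₗ aOp k) (singleExcitation c) = c k • ket (eConf j) := by
  simp [singleExcitation_apply, hop_ket_eConf, smul_ite]

lemma norm_singleExcitation_sq (c : Fin N → ℂ) : ‖singleExcitation c‖ ^ 2 = ∑ j, ‖c j‖ ^ 2 := by
  have h := orthonormal_ket_eConf.inner_sum c c Finset.univ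
  rw [← singleExcitation_apply] at h
  rw [@norm_sq_eq_re_inner ℂ, h]
  simp [conj_mul', ← ofReal_pow]

def planeWave (q : ℝ) (j : Fin N) : ℂ := exp (-I * q * ((j : ℕ) + 1))

lemma Wq_eq_smul_singleExcitation (q : ℝ) :
    Wq N q = (Real.sqrt N : ℂ)⁻¹ • singleExcitation (planeWave q) := by
  rw [singleExcitation_apply]
  rfl

lemma norm_planeWave (q : ℝ) (j : Fin N) : ‖planeWave q j‖ = 1 := by
  rw [planeWave, norm_exp]
  simp

lemma norm_singleExcitation_planeWave (q : ℝ) :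
    ‖singleExcitation (planeWave (N := N) q)‖ = Real.sqrt N := by
  rw [← Real.sqrt_sq (norm_nonneg _), norm_singleExcitation_sq]
  simp [norm_planeWave]

variable [NeZero N] {q : ℝ}

lemma sum_smul_ket_eConf_add_one (c : Fin N → ℂ) :
    ∑ j, c j • ket (eConf (j + 1)) = singleExcitation fun j => c (j - 1) := by
  rw [singleExcitation_apply]
  exact Fintype.sum_equiv (Equiv.addRight 1) _ _ fun j => by simp

lemma HImHop_singleExcitation (c : Fin N → ℂ) :
    HImHop N (singleExcitation c)
      = singleExcitation fun j => I / 2 * (c (j + 1) - c (j - 1)) := by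
  simp only [HImHop, LinearMap.smul_apply, LinearMap.sum_apply, LinearMap.sub_apply,
    hop_singleExcitation, Finset.sum_sub_distrib, sum_smul_ket_eConf_add_one]
  rw [← singleExcitation_apply (fun j => c (j + 1)), ← map_sub, ← map_smul]
  rfl

lemma HReHop_singleExcitation (c : Fin N → ℂ) :
    HReHop N (singleExcitation c)
      = singleExcitation fun j => c j - (c (j + 1) + c (j - 1)) / 2 := by
  simp only [HReHop, nOp, LinearMap.smul_apply, LinearMap.sum_apply, LinearMap.sub_apply,
    LinearMap.add_apply, hop_singleExcitation, Finset.sum_sub_distrib, Finset.sum_add_distrib,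
    sum_smul_ket_eConf_add_one]
  rw [← singleExcitation_apply c, ← singleExcitation_apply (fun j => c (j + 1)), ← map_add,
    ← map_sub, ← map_sub, ← map_smul]
  congr 1
  funext j
  simp only [Pi.smul_apply, Pi.sub_apply, Pi.add_apply, smul_eq_mul, sub_add_cancel]
  ring

lemma exp_neg_I_mul_mul_natCast_eq_one (hq : ∃ m : ℤ, q = 2 * Real.pi * m / N) :
    exp (-I * q * N) = 1 := by
  obtain ⟨m, rfl⟩ := hq
  have hN : (N : ℂ) ≠ 0 := Nat.cast_ne_zero.mpr (NeZero.ne N)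
  rw [show -I * ((2 * Real.pi * m / N : ℝ) : ℂ) * N = (-m : ℤ) * (2 * Real.pi * I) by
    push_cast
    field_simp]
  exact exp_int_mul_two_pi_mul_I _

lemma planeWave_add_one (hq : exp (-I * q * N) = 1) (j : Fin N) :
    planeWave q (j + 1) = exp (-I * q) * planeWave q j := by
  have hper : Function.Periodic (fun n : ℕ => exp (-I * q * n)) N := fun n => by
    simp only [Nat.cast_add, mul_add, exp_add, hq, mul_one]
  have hval : ((j + 1 : Fin N) : ℕ) = ((j : ℕ) + 1) % N := by
    simp [Fin.val_add]
  have := hper.map_mod_nat ((j : ℕ) + 1)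
  simp only [planeWave, hval] at this ⊢
  rw [mul_add, mul_one, exp_add, mul_comm, this]
  push_cast
  ring_nf

lemma planeWave_sub_one (hq : exp (-I * q * N) = 1) (j : Fin N) :
    planeWave q (j - 1) = exp (I * q) * planeWave q j := by
  rw [← sub_add_cancel j 1, planeWave_add_one hq, add_sub_cancel_right, ← mul_assoc,
    ← exp_add]
  simp

lemma HImHop_singleExcitation_planeWave (hq : exp (-I * q * N) = 1) :
    HImHop N (singleExcitation (planeWave q))
      = (Real.sin q : ℂ) • singleExcitation (planeWave q) := by
  rw [HImHop_singleExcitation, ← map_smul]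
  congr 1
  funext j
  rw [planeWave_add_one hq, planeWave_sub_one hq, Pi.smul_apply, smul_eq_mul, ofReal_sin, sin]
  ring_nf

lemma HReHop_singleExcitation_planeWave (hq : exp (-I * q * N) = 1) :
    HReHop N (singleExcitation (planeWave q))
      = ((1 - Real.cos q : ℝ) : ℂ) • singleExcitation (planeWave q) := by
  rw [HReHop_singleExcitation, ← map_smul]
  congr 1
  funext j
  rw [planeWave_add_one hq, planeWave_sub_one hq, Pi.smul_apply, smul_eq_mul]
  push_cast
  rw [cos]
  ring_nf

end HardCoreChain

open HardCoreChain in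
theorem Wq_dispersion_general (N : ℕ) [NeZero N] (q : ℝ)
    (hq : ∃ m : ℤ, q = 2 * Real.pi * m / N) :
    HImHop N (Wq N q) = (Real.sin q : ℂ) • Wq N q
      ∧ HReHop N (Wq N q) = ((1 - Real.cos q : ℝ) : ℂ) • Wq N q
      ∧ ‖Wq N q‖ = 1 := by
  have hper := exp_neg_I_mul_mul_natCast_eq_one hq
  have hN : Real.sqrt N ≠ 0 := Real.sqrt_ne_zero'.mpr (Nat.cast_pos.mpr (NeZero.pos N))
  refine ⟨?_, ?_, ?_⟩
  · rw [Wq_eq_smul_singleExcitation, map_smul, HImHop_singleExcitation_planeWave hper,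
      smul_comm]
  · rw [Wq_eq_smul_singleExcitation, map_smul, HReHop_singleExcitation_planeWave hper,
      smul_comm]
  · rw [Wq_eq_smul_singleExcitation, norm_smul, norm_singleExcitation_planeWave, norm_inv,
      Complex.norm_real, Real.norm_of_nonneg (Real.sqrt_nonneg _), inv_mul_cancel₀ hN]

/-- For `q = 2πm/N`, on the periodic chain:
`H_ImHop |W_q⟩ = sin(q) |W_q⟩`, `H_ReHop |W_q⟩ = (1 − cos q)|W_q⟩`, and `|W_q⟩` is a unit
vector. -/
theorem Wq_dispersion (N : ℕ) [NeZero N] (hN : 2 ≤ N) (q : ℝ)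
    (hq : ∃ m : ℤ, q = 2 * Real.pi * m / N) :
    HImHop N (Wq N q) = (Real.sin q : ℂ) • Wq N q
      ∧ HReHop N (Wq N q) = ((1 - Real.cos q : ℝ) : ℂ) • Wq N q
      ∧ ‖Wq N q‖ = 1 :=
  Wq_dispersion_general N q hq

end
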